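/- Let G be a finite DAG with goal set O, and suppose a factoring edge (P,Q) between two nodes in the same unification cluster is reversed to (Q,P), with all other edges unchanged and the result still acyclic. Then the set of nodes reachable-from-some-goal pairs' common ancestors is unchanged up to the cluster, and the number of source nodes |A(G)| is preserved. -/
import Mathlib


open Classical in
/-- Reversing a single factoring edge (P,Q) to (Q,P), where P and Q have no
other incoming edges and the result is still acyclic, preserves the number of
source nodes |A(G)|. -/
theorem stmt_15 {V : Type*} [Fintype V] [DecidableEq V]
    (E : V → V → Prop) (P Q : V) (hPQ : P ≠ Q)
    (hE : E P Q) (hQin : ∀ b : V, E b Q → b = P) (hPin : ∀ b : V, ¬ E b P)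
    (E' : V → V → Prop)
    (hE' : ∀ a b : V, E' a b ↔ ((E a b ∧ ¬ (a = P ∧ b = Q)) ∨ (a = Q ∧ b = P)))
    (hacyc : ∀ v : V, ¬ Relation.TransGen E v v)
    (hacyc' : ∀ v : V, ¬ Relation.TransGen E' v v) :
    (Finset.univ.filter (fun a : V => ∀ b : V, ¬ E' b a)).card =
      (Finset.univ.filter (fun a : V => ∀ b : V, ¬ E b a)).card := by
  classical
  set S : Finset V := Finset.univ.filter (fun a : V => ∀ b : V, ¬ E b a) with hS
  set S' : Finset V := Finset.univ.filter (fun a : V => ∀ b : V, ¬ E' b a) with hS'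
  have hPS : P ∈ S := by
    simp only [hS, Finset.mem_filter, Finset.mem_univ, true_and]
    exact hPin
  have hQS : Q ∉ S := by
    simp only [hS, Finset.mem_filter, Finset.mem_univ, true_and]
    intro h; exact h P hE
  have hkey : S' = insert Q (S.erase P) := by
    ext a
    simp only [hS, hS', Finset.mem_filter, Finset.mem_univ, true_and,
      Finset.mem_insert, Finset.mem_erase]
    constructor
    · intro h
      by_cases haQ : a = Q
      · exact Or.inl haQ
      · refine Or.inr ⟨fun haP => ?_, fun b hb => h b ?_⟩
        · exact h Q ((hE' Q a).2 (Or.inr ⟨rfl, haP⟩))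
        · exact (hE' b a).2 (Or.inl ⟨hb, fun ⟨_, hb2⟩ => haQ hb2⟩)
    · rintro (ha | ⟨haP, h⟩)
      · intro b hb
        rcases (hE' b a).1 hb with ⟨hb1, hb2⟩ | ⟨_, hb2⟩
        · exact hb2 ⟨hQin b (ha ▸ hb1), ha⟩
        · exact hPQ (hb2 ▸ ha)
      · intro b hb
        rcases (hE' b a).1 hb with ⟨hb1, _⟩ | ⟨_, hb2⟩
        · exact h b hb1
        · exact haP hb2
  rw [hkey, Finset.card_insert_of_notMem (by simp [hQS]),
    Finset.card_erase_of_mem hPS]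
  have := Finset.card_pos.2 ⟨P, hPS⟩
  omega
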